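/- Let n ≥ 2 and let μ be a positive integer with μ mod 9 ∈ {2, 5}. Define f : ZMod(3^n) → ZMod(3^n) by f(x) = μ·x·(x+1). Then the maximum over all x₀ ∈ ZMod(3^n) of the minimal period of x₀ under f equals 2·3^{n−2}. -/

import Mathlib

/-!
Modulo powers of `3` the map `f(x) = μ x (x + 1)`, `μ ≡ 2 (mod 3)`, preserves the residue classes
`0` and `1` and sends `2` into `0`. On the class `1` it is a contraction, since
`f a - f b = (a - b) μ (a + b + 1)` and `3 ∣ a + b + 1`; so the only periodic points there are
fixed.
On the class `0` write `D_k(x) = f^[2·3^k](x) - x`; then `9 ∣ D_0(x)` because `f x ≡ μ x (mod 9)`,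
and a lifting-the-exponent computation gives `D_{k+1} = 3 D_k u` with `u ≡ 1 (mod 3)`.
Hence every point of the class `0` has period dividing `2·3^(n-2)` modulo `3^n`. For `x = 3` the
condition `μ mod 9 ∈ {2, 5}` makes `D_0(3)` divisible by exactly `9`, and odd iterates satisfy
`f^[p](3) ≡ 3 μ^p ≡ -3 (mod 9)`, so the period of `3` is exactly `2·3^(n-2)`.
-/

open Function Finset

theorem Function.minimalPeriod_eq_of_not_isPeriodicPt_div_prime {α : Type*} {f : α → α}
    {x : α} {T : ℕ} (hT : IsPeriodicPt f T x)
    (hdiv : ∀ q, q.Prime → q ∣ T → ¬IsPeriodicPt f (T / q) x) : minimalPeriod f x = T := by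
  obtain ⟨d, hd⟩ := hT.minimalPeriod_dvd
  by_contra hne
  have hd1 : d ≠ 1 := by
    rintro rfl
    exact hne (by simpa using hd.symm)
  obtain ⟨q, hq, hqd⟩ := Nat.exists_prime_and_dvd hd1
  refine hdiv q hq (hd ▸ hqd.mul_left _) ?_
  rw [hd, Nat.mul_div_assoc _ hqd]
  exact (isPeriodicPt_minimalPeriod f x).mul_const _

namespace Logistic

section CommRing

variable {R S : Type*} [CommRing R] [CommRing S]

def logistic (μ x : R) : R := μ * x * (x + 1)

theorem map_logistic_iterate (φ : R →+* S) (μ x : R) (L : ℕ) :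
    φ ((logistic μ)^[L] x) = (logistic (φ μ))^[L] (φ x) :=
  Semiconj.iterate_right (fun y => by simp [logistic]) L x

theorem intCast_logistic_iterate (m x : ℤ) (L : ℕ) :
    (((logistic m)^[L] x : ℤ) : R) = (logistic (m : R))^[L] (x : R) := by
  simpa using map_logistic_iterate (Int.castRingHom R) m x L

theorem logistic_sub_logistic (μ a b : R) :
    logistic μ a - logistic μ b = (a - b) * (μ * (a + b + 1)) := by
  simp only [logistic]
  ring

def orbitMultiplier (μ a b : R) (L : ℕ) : R :=
  ∏ i ∈ range L, μ * ((logistic μ)^[i] a + (logistic μ)^[i] b + 1)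

theorem iterate_sub_iterate (μ a b : R) (L : ℕ) :
    (logistic μ)^[L] a - (logistic μ)^[L] b = (a - b) * orbitMultiplier μ a b L := by
  induction L with
  | zero => simp [orbitMultiplier]
  | succ L ih =>
    rw [iterate_succ_apply', iterate_succ_apply', logistic_sub_logistic, ih]
    simp only [orbitMultiplier, prod_range_succ]
    ring

theorem map_orbitMultiplier (φ : R →+* S) (μ a b : R) (L : ℕ) :
    φ (orbitMultiplier μ a b L) = orbitMultiplier (φ μ) (φ a) (φ b) L := by
  simp [orbitMultiplier, map_logistic_iterate]

theorem intCast_orbitMultiplier (m a b : ℤ) (L : ℕ) :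
    ((orbitMultiplier m a b L : ℤ) : R) = orbitMultiplier (m : R) a b L := by
  simpa using map_orbitMultiplier (Int.castRingHom R) m a b L

theorem orbitMultiplier_zero_zero (μ : R) (L : ℕ) : orbitMultiplier μ 0 0 L = μ ^ L := by
  have h0 (i : ℕ) : (logistic μ)^[i] 0 = 0 := iterate_fixed (by simp [logistic]) i
  simp [orbitMultiplier, h0]

end CommRing

section Int

variable {m x : ℤ}

theorem mapsTo_logistic_three_dvd (m : ℤ) :
    Set.MapsTo (logistic m) {x | 3 ∣ x} {x | 3 ∣ x} :=
  fun x (hx : 3 ∣ x) => (hx.mul_left m).mul_right (x + 1)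

theorem mapsTo_logistic_modEq_one (hm : m ≡ 2 [ZMOD 3]) :
    Set.MapsTo (logistic m) {x | x ≡ 1 [ZMOD 3]} {x | x ≡ 1 [ZMOD 3]} :=
  fun x (hx : x ≡ 1 [ZMOD 3]) => ((hm.mul hx).mul (hx.add_right 1)).trans (by decide)

theorem pow_dvd_iterate_sub_iterate (hm : m ≡ 2 [ZMOD 3]) {a b : ℤ} (ha : a ≡ 1 [ZMOD 3])
    (hb : b ≡ 1 [ZMOD 3]) (j : ℕ) : 3 ^ j ∣ (logistic m)^[j] a - (logistic m)^[j] b := by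
  rw [iterate_sub_iterate, orbitMultiplier]
  refine Dvd.dvd.mul_left ?_ _
  rw [show (3 : ℤ) ^ j = ∏ _i ∈ range j, 3 by simp]
  refine prod_dvd_prod_of_dvd _ _ fun i _ => Dvd.dvd.mul_left ?_ m
  have hA := (mapsTo_logistic_modEq_one hm).iterate i ha
  have hB := (mapsTo_logistic_modEq_one hm).iterate i hb
  exact Int.modEq_zero_iff_dvd.mp (((hA.add hB).add_right 1).trans (by decide))

theorem logistic_modEq_mul (m : ℤ) {y : ℤ} (hy : 3 ∣ y) : logistic m y ≡ m * y [ZMOD 9] := by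
  obtain ⟨t, rfl⟩ := hy
  exact Int.modEq_iff_dvd.mpr ⟨-(m * t ^ 2), by simp only [logistic]; ring⟩

theorem iterate_modEq_pow_mul (m : ℤ) (hx : 3 ∣ x) (M : ℕ) :
    (logistic m)^[M] x ≡ m ^ M * x [ZMOD 9] := by
  induction M with
  | zero => simp [Int.ModEq.refl]
  | succ M ih =>
    rw [iterate_succ_apply']
    calc logistic m ((logistic m)^[M] x)
        ≡ m * (logistic m)^[M] x [ZMOD 9] :=
          logistic_modEq_mul m ((mapsTo_logistic_three_dvd m).iterate M hx)
      _ ≡ m * (m ^ M * x) [ZMOD 9] := ih.mul_left m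
      _ = m ^ (M + 1) * x := by ring

theorem exists_iterate_mul_three_sub (hx : 3 ∣ x) {L : ℕ} (hmL : m ^ L ≡ 1 [ZMOD 3])
    (h9 : (logistic m)^[L] x ≡ x [ZMOD 9]) :
    ∃ u, (logistic m)^[L * 3] x - x = 3 * ((logistic m)^[L] x - x) * u ∧ u ≡ 1 [ZMOD 3] := by
  set g := (logistic m)^[L]
  set Q₁ := orbitMultiplier m (g x) x L
  set Q₂ := orbitMultiplier m (g (g x)) (g x) L
  have e₁ : g (g x) - g x = (g x - x) * Q₁ := iterate_sub_iterate m (g x) x L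
  have e₂ : g (g (g x)) - g (g x) = (g (g x) - g x) * Q₂ := iterate_sub_iterate m _ _ L
  -- `Q₁ ≡ m ^ L ≡ 1 (mod 3)` as the orbits stay in `3ℤ`, and `Q₂ ≡ Q₁ (mod 9)` as
  -- `g x ≡ x (mod 9)`; so `g³ x - x = (g x - x) (1 + Q₁ + Q₁ Q₂)`, where
  -- `1 + Q₁ + Q₁ Q₂ ≡ 3 (mod 9)`.
  have hQ₁ : Q₁ ≡ 1 [ZMOD 3] := by
    have h0 : (x : ZMod 3) = 0 := (ZMod.intCast_zmod_eq_zero_iff_dvd x 3).mpr hx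
    have hg0 : ((g x : ℤ) : ZMod 3) = 0 := (ZMod.intCast_zmod_eq_zero_iff_dvd _ 3).mpr
      ((mapsTo_logistic_three_dvd m).iterate L hx)
    have hmL3 := (ZMod.intCast_eq_intCast_iff _ _ 3).mpr hmL
    refine (ZMod.intCast_eq_intCast_iff _ _ 3).mp ?_
    rw [intCast_orbitMultiplier, h0, hg0, orbitMultiplier_zero_zero]
    exact_mod_cast hmL3
  have hQ₂ : Q₂ ≡ Q₁ [ZMOD 9] := by
    replace h9 := (ZMod.intCast_eq_intCast_iff _ _ 9).mpr h9
    refine (ZMod.intCast_eq_intCast_iff _ _ 9).mp ?_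
    have hgg : ((g (g x) : ℤ) : ZMod 9) = ((g x : ℤ) : ZMod 9) := by
      simp only [g, intCast_logistic_iterate] at h9 ⊢
      rw [h9, h9]
    rw [intCast_orbitMultiplier, intCast_orbitMultiplier, hgg, h9]
  obtain ⟨a, ha⟩ := hQ₁.symm.dvd
  obtain ⟨b, hb⟩ := hQ₂.symm.dvd
  refine ⟨1 + 3 * (a + a ^ 2 + b + 3 * a * b), ?_,
    Int.modEq_iff_dvd.mpr ⟨-(a + a ^ 2 + b + 3 * a * b), by ring⟩⟩
  calc (logistic m)^[L * 3] x - x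
        = g (g (g x)) - g (g x) + (g (g x) - g x) + (g x - x) := by
        rw [iterate_mul]
        show g (g (g x)) - x = _
        ring
    _ = 3 * (g x - x) * (1 + 3 * (a + a ^ 2 + b + 3 * a * b)) := by
        rw [e₂, e₁, show Q₂ = 1 + 3 * a + 9 * b by linarith, show Q₁ = 1 + 3 * a by linarith]
        ring

theorem exists_iterate_mul_pow_three_sub (hx : 3 ∣ x) {L : ℕ} (hmL : m ^ L ≡ 1 [ZMOD 3])
    (h9 : (logistic m)^[L] x ≡ x [ZMOD 9]) (k : ℕ) :
    ∃ c, (logistic m)^[L * 3 ^ k] x - x = 3 ^ k * ((logistic m)^[L] x - x) * c ∧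
      c ≡ 1 [ZMOD 3] := by
  induction k with
  | zero => exact ⟨1, by simp, rfl⟩
  | succ k ih =>
    obtain ⟨c, hc, hc1⟩ := ih
    have hmL' : m ^ (L * 3 ^ k) ≡ 1 [ZMOD 3] := by
      simpa [pow_mul] using hmL.pow (3 ^ k)
    have h9' : (logistic m)^[L * 3 ^ k] x ≡ x [ZMOD 9] :=
      (Int.modEq_iff_dvd.mpr (hc ▸ (h9.symm.dvd.mul_left _).mul_right c)).symm
    obtain ⟨u, hu, hu1⟩ := exists_iterate_mul_three_sub hx hmL' h9'
    refine ⟨c * u, ?_, by simpa using hc1.mul hu1⟩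
    rw [pow_succ, ← mul_assoc, hu, hc]
    ring

theorem pow_dvd_iterate_two_mul_pow_three_sub (hm : m ≡ 2 [ZMOD 3]) (hx : 3 ∣ x) (k : ℕ) :
    3 ^ (k + 2) ∣ (logistic m)^[2 * 3 ^ k] x - x := by
  have hm2 : m ^ 2 ≡ 1 [ZMOD 3] := (hm.pow 2).trans (by decide)
  have h9 : (logistic m)^[2] x ≡ x [ZMOD 9] := by
    refine (iterate_modEq_pow_mul m hx 2).trans (Int.modEq_iff_dvd.mpr ?_)
    obtain ⟨s, hs⟩ := hm2.dvd
    obtain ⟨t, rfl⟩ := hx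
    exact ⟨s * t, by linear_combination (3 * t) * hs⟩
  obtain ⟨c, hc, -⟩ := exists_iterate_mul_pow_three_sub hx hm2 h9 k
  rw [hc, pow_add]
  exact (mul_dvd_mul_left _ (by simpa using h9.symm.dvd)).mul_right c

theorem exists_iterate_two_sub_three (hm9 : m % 9 = 2 ∨ m % 9 = 5) :
    ∃ c, (logistic m)^[2] 3 - 3 = 9 * c ∧ ¬3 ∣ c := by
  have hD : (logistic m)^[2] 3 - 3 = 3 * (48 * m ^ 3 + 4 * m ^ 2 - 1) := by
    simp only [iterate_succ, iterate_zero, comp_apply, id, logistic]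
    ring
  have hP : 48 * m ^ 3 + 4 * m ^ 2 - 1 ≡ 48 * (m % 9) ^ 3 + 4 * (m % 9) ^ 2 - 1 [ZMOD 9] := by
    gcongr <;> exact (Int.mod_modEq m 9).symm
  rw [hD]
  generalize 48 * m ^ 3 + 4 * m ^ 2 - 1 = P at hP
  refine ⟨P / 3, ?_⟩
  rcases hm9 with h | h <;> rw [h] at hP <;> unfold Int.ModEq at hP <;> norm_num at hP <;> omega

theorem exists_iterate_two_mul_pow_three_sub_three (hm9 : m % 9 = 2 ∨ m % 9 = 5) (k : ℕ) :
    ∃ c, (logistic m)^[2 * 3 ^ k] 3 - 3 = 3 ^ (k + 2) * c ∧ ¬3 ∣ c := by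
  have hm2 : m ^ 2 ≡ 1 [ZMOD 3] := by
    refine (Int.ModEq.pow 2 (?_ : m ≡ 2 [ZMOD 3])).trans (by decide)
    unfold Int.ModEq; omega
  obtain ⟨c₀, hc₀, hc₀3⟩ := exists_iterate_two_sub_three hm9
  obtain ⟨c, hc, hc1⟩ := exists_iterate_mul_pow_three_sub (dvd_refl 3) hm2
    ((Int.modEq_iff_dvd.mpr ⟨c₀, hc₀⟩).symm) k
  refine ⟨c₀ * c, by rw [hc, hc₀]; ring, fun h => ?_⟩
  rcases Int.prime_three.dvd_mul.mp h with h | h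
  · exact hc₀3 h
  · unfold Int.ModEq at hc1; omega

theorem not_iterate_odd_three_modEq (hm : m ≡ 2 [ZMOD 3]) {p : ℕ} (hp : Odd p) :
    ¬(logistic m)^[p] 3 ≡ 3 [ZMOD 9] := by
  intro h
  have hmp : m ^ p ≡ -1 [ZMOD 3] := by
    simpa [hp.neg_one_pow] using (hm.trans (by decide : (2 : ℤ) ≡ -1 [ZMOD 3])).pow p
  have key : (3 : ℤ) ≡ -3 [ZMOD 9] := h.symm.trans <|
    (iterate_modEq_pow_mul m (dvd_refl 3) p).trans
      (by simpa [mul_comm] using hmp.mul_left' (c := 3))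
  exact absurd key (by decide)

end Int

section ZMod

variable {m x : ℤ}

theorem isPeriodicPt_intCast_iff {N L : ℕ} :
    IsPeriodicPt (logistic (m : ZMod N)) L (x : ZMod N) ↔ (N : ℤ) ∣ (logistic m)^[L] x - x := by
  rw [IsPeriodicPt, IsFixedPt, ← intCast_logistic_iterate, ZMod.intCast_eq_intCast_iff_dvd_sub,
    dvd_sub_comm]

theorem isPeriodicPt_of_three_dvd (hm : m ≡ 2 [ZMOD 3]) (hx : 3 ∣ x) (k : ℕ) :
    IsPeriodicPt (logistic (m : ZMod (3 ^ (k + 2)))) (2 * 3 ^ k) (x : ZMod (3 ^ (k + 2))) := by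
  rw [isPeriodicPt_intCast_iff]
  exact_mod_cast pow_dvd_iterate_two_mul_pow_three_sub hm hx k

theorem minimalPeriod_le_one_of_modEq_one (hm : m ≡ 2 [ZMOD 3]) (hx : x ≡ 1 [ZMOD 3])
    (n : ℕ) : minimalPeriod (logistic (m : ZMod (3 ^ n))) x ≤ 1 := by
  set f := logistic (m : ZMod (3 ^ n))
  by_cases hper : (x : ZMod (3 ^ n)) ∈ periodicPts f
  · -- `f^[n]` is injective on periodic points but identifies `x` with `f x`
    have hfix : f x = x := by
      refine ((bijOn_periodicPts f).iterate n).injOn ((bijOn_periodicPts f).mapsTo hper) hper ?_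
      have hfx : f x = ((logistic m x : ℤ) : ZMod (3 ^ n)) := by simp [f, logistic]
      rw [hfx, ← intCast_logistic_iterate, ← intCast_logistic_iterate,
        ZMod.intCast_eq_intCast_iff_dvd_sub]
      exact_mod_cast pow_dvd_iterate_sub_iterate hm hx (mapsTo_logistic_modEq_one hm hx) n
    exact (minimalPeriod_eq_one_iff_isFixedPt.mpr hfix).le
  · rw [minimalPeriod_eq_zero_of_notMem_periodicPts hper]
    exact zero_le_one

theorem minimalPeriod_eq_zero_of_modEq_two (m : ℤ) (hx : x ≡ 2 [ZMOD 3]) {n : ℕ}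
    (hn : n ≠ 0) : minimalPeriod (logistic (m : ZMod (3 ^ n))) x = 0 := by
  refine minimalPeriod_eq_zero_of_notMem_periodicPts fun hper => ?_
  obtain ⟨L, hL, hper⟩ := mem_periodicPts.mp hper
  rw [isPeriodicPt_intCast_iff] at hper
  have h3L : 3 ∣ (logistic m)^[L] x := by
    obtain ⟨L, rfl⟩ := Nat.exists_eq_add_one_of_ne_zero hL.ne'
    rw [iterate_succ_apply]
    refine (mapsTo_logistic_three_dvd m).iterate L (Dvd.dvd.mul_left ?_ _)
    unfold Int.ModEq at hx
    omega
  have h3 : 3 ∣ (logistic m)^[L] x - x := (dvd_pow_self 3 hn).trans (by exact_mod_cast hper)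
  have := (dvd_sub_right h3L).mp h3
  unfold Int.ModEq at hx
  omega

theorem minimalPeriod_le (hm : m ≡ 2 [ZMOD 3]) (k : ℕ) (x : ZMod (3 ^ (k + 2))) :
    minimalPeriod (logistic (m : ZMod (3 ^ (k + 2)))) x ≤ 2 * 3 ^ k := by
  obtain ⟨z, rfl⟩ := ZMod.intCast_surjective x
  rcases (by omega : z % 3 = 0 ∨ z % 3 = 1 ∨ z % 3 = 2) with h | h | h
  · exact Nat.le_of_dvd (by positivity)
      (isPeriodicPt_of_three_dvd hm (Int.dvd_of_emod_eq_zero h) k).minimalPeriod_dvd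
  · exact (minimalPeriod_le_one_of_modEq_one hm h _).trans
      (Nat.one_le_iff_ne_zero.mpr (by positivity))
  · rw [minimalPeriod_eq_zero_of_modEq_two m h (by omega)]
    exact Nat.zero_le _

theorem minimalPeriod_three (hm9 : m % 9 = 2 ∨ m % 9 = 5) (k : ℕ) :
    minimalPeriod (logistic (m : ZMod (3 ^ (k + 2)))) ((3 : ℤ) : ZMod (3 ^ (k + 2))) =
      2 * 3 ^ k := by
  have hm : m ≡ 2 [ZMOD 3] := by unfold Int.ModEq; omega
  refine minimalPeriod_eq_of_not_isPeriodicPt_div_prime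
    (isPeriodicPt_of_three_dvd hm (dvd_refl 3) k) fun q hq hqT => ?_
  rw [isPeriodicPt_intCast_iff]
  push_cast
  rcases hq.dvd_mul.mp hqT with h2 | h3
  · obtain rfl := (Nat.prime_dvd_prime_iff_eq hq Nat.prime_two).mp h2
    rw [Nat.mul_div_cancel_left _ two_pos]
    refine fun h => not_iterate_odd_three_modEq hm (p := 3 ^ k) ((by decide : Odd 3).pow) ?_
    exact (Int.modEq_iff_dvd.mpr ((pow_dvd_pow 3 (by omega : 2 ≤ k + 2)).trans h)).symm
  · obtain rfl := (Nat.prime_dvd_prime_iff_eq hq Nat.prime_three).mp (hq.dvd_of_dvd_pow h3)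
    have hk : k ≠ 0 := by
      rintro rfl
      norm_num at h3
    obtain ⟨j, rfl⟩ := Nat.exists_eq_add_one_of_ne_zero hk
    rw [show 2 * 3 ^ (j + 1) / 3 = 2 * 3 ^ j by
      rw [pow_succ, ← mul_assoc, Nat.mul_div_cancel _ three_pos]]
    obtain ⟨c, hc, hc3⟩ := exists_iterate_two_mul_pow_three_sub_three hm9 j
    rw [hc, show j + 1 + 2 = j + 2 + 1 by ring, pow_succ, mul_dvd_mul_iff_left (by positivity)]
    exact hc3

end ZMod

end Logistic

open Logistic in
theorem logistic_maxPeriod_mu_two_five_general (n : ℕ) (hn : 2 ≤ n) (μ : ℕ)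
    (hμ9 : μ % 9 = 2 ∨ μ % 9 = 5) :
    Finset.univ.sup
        (fun x₀ : ZMod (3 ^ n) =>
          Function.minimalPeriod
            (fun x : ZMod (3 ^ n) => (μ : ZMod (3 ^ n)) * x * (x + 1)) x₀) =
      2 * 3 ^ (n - 2) := by
  obtain ⟨k, rfl⟩ : ∃ k, n = k + 2 := ⟨n - 2, by omega⟩
  have hf : (fun x : ZMod (3 ^ (k + 2)) => (μ : ZMod (3 ^ (k + 2))) * x * (x + 1)) =
      logistic ((μ : ℤ) : ZMod (3 ^ (k + 2))) := by
    funext x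
    simp [logistic]
  have hm9 : (μ : ℤ) % 9 = 2 ∨ (μ : ℤ) % 9 = 5 := by omega
  rw [hf, Nat.add_sub_cancel]
  refine le_antisymm (Finset.sup_le fun x _ => minimalPeriod_le ?_ k x) ?_
  · unfold Int.ModEq; omega
  · rw [← minimalPeriod_three hm9 k]
    exact Finset.le_sup (Finset.mem_univ _)

/-- Corollary 1 (case `μ mod 9 ∈ {2,5}`): for `n ≥ 2` and a positive integer `μ`
with `μ mod 9 ∈ {2,5}`, the maximum over all `x₀ ∈ ZMod (3^n)` of the minimal
period of `x₀` under `f(x) = μ·x·(x+1)` equals `2·3^{n−2}`. -/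
theorem logistic_maxPeriod_mu_two_five (n : ℕ) (hn : 2 ≤ n) (μ : ℕ) (hμ : 0 < μ)
    (hμ9 : μ % 9 = 2 ∨ μ % 9 = 5) :
    Finset.univ.sup
        (fun x₀ : ZMod (3 ^ n) =>
          Function.minimalPeriod
            (fun x : ZMod (3 ^ n) => (μ : ZMod (3 ^ n)) * x * (x + 1)) x₀) =
      2 * 3 ^ (n - 2) :=
  logistic_maxPeriod_mu_two_five_general n hn μ hμ9
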